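/- (Exact observability estimate for conservative port-Hamiltonian systems, trajectory version of Theorem 3.2.) Assume in addition that G₀* = −G₀. Let x : [0,∞) × [0,1] → ℂⁿ be such that (t,ζ) ↦ x(t,ζ), (t,ζ) ↦ ∂x/∂t(t,ζ) and (t,ζ) ↦ ∂(H x)/∂ζ(t,ζ) exist and are continuous, and suppose: (i) ∂x/∂t(t,ζ) = P₁ ∂(H x)/∂ζ(t,ζ) + G₀ H(ζ) x(t,ζ) for all t ≥ 0, ζ ∈ [0,1]; (ii) W_B·((H x)(t,1), (H x)(t,0)) = 0 for all t ≥ 0; (iii) ∫₀¹ ‖x(t,ζ)‖² dζ → 0 as t → ∞. Define the output y(t) := W_C·((H x)(t,1), (H x)(t,0)). If t ↦ ‖y(t)‖² is integrable on [0,∞), then ∫₀^∞ ‖y(t)‖² dt ≥ (2/‖P‖)·‖x(0,·)‖_X², where ‖x(0,·)‖_X² = (1/2)∫₀¹ x(0,ζ)* H(ζ) x(0,ζ) dζ and ‖P‖ is the operator norm of P. -/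

import Mathlib

open Matrix MeasureTheory Filter
open scoped ComplexOrder

/-!
With `E(t) = ∫₀¹ x* H x dζ`, Hermitian `P₁`, `H` and skew-adjoint `G₀` give the pointwise
conservation law `∂ₜ (x* H x) = ∂_ζ ((Hx)* P₁ (Hx))`; integrating over `[0,T] × [0,1]`,
`E(T) - E(0)` is the time integral of the boundary flux
`(Hx)(t,1)* P₁ (Hx)(t,1) - (Hx)(t,0)* P₁ (Hx)(t,0)`. Since `R₀* Σ R₀ = diag(P₁, -P₁)`, this flux
is the quadratic form of `P` at `W_BC ((Hx)(t,1), (Hx)(t,0)) = (0, y(t))`, hence at least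
`-‖P‖ ‖y(t)‖²`. So `E(0) ≤ E(T) + ‖P‖ ∫₀^∞ ‖y‖²`, and `E(T) ≤ C ∫₀¹ ‖x(T,ζ)‖² dζ → 0`.
-/

open Set

theorem integral_eq_sub_of_hasDerivWithinAt_Icc {E : Type*} [NormedAddCommGroup E]
    [NormedSpace ℝ E] [CompleteSpace E] {f f' : ℝ → E} {a b : ℝ} (hab : a ≤ b)
    (hf : ∀ x ∈ Icc a b, HasDerivWithinAt f (f' x) (Icc a b) x)
    (hf' : ContinuousOn f' (Icc a b)) :
    ∫ x in a..b, f' x = f b - f a :=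
  intervalIntegral.integral_eq_sub_of_hasDerivAt_of_le hab
    (fun x hx => (hf x hx).continuousWithinAt)
    (fun x hx => (hf x (Ioo_subset_Icc_self hx)).hasDerivAt (Icc_mem_nhds hx.1 hx.2))
    (hf'.intervalIntegrable_of_Icc hab)

theorem intervalIntegral_integral_swap_of_continuousOn {E : Type*} [NormedAddCommGroup E]
    [NormedSpace ℝ E] {f : ℝ → ℝ → E} {a b c d : ℝ} (hab : a ≤ b) (hcd : c ≤ d)
    (hf : ContinuousOn (Function.uncurry f) (Icc a b ×ˢ Icc c d)) :
    ∫ x in a..b, ∫ y in c..d, f x y = ∫ y in c..d, ∫ x in a..b, f x y := by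
  simp only [intervalIntegral.integral_of_le hab, intervalIntegral.integral_of_le hcd]
  refine integral_integral_swap ?_
  rw [Measure.prod_restrict]
  exact ((hf.integrableOn_compact (isCompact_Icc.prod isCompact_Icc)).mono_set
    (prod_mono Ioc_subset_Icc_self Ioc_subset_Icc_self))

theorem integral_sub_eq_integral_flux_sub {E : Type*} [NormedAddCommGroup E]
    [NormedSpace ℝ E] [CompleteSpace E] {q g D : ℝ → ℝ → E} {a b c d : ℝ}
    (hab : a ≤ b) (hcd : c ≤ d)
    (hq : ∀ t ∈ Icc a b, ∀ ζ ∈ Icc c d, HasDerivWithinAt (q · ζ) (D t ζ) (Icc a b) t)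
    (hg : ∀ t ∈ Icc a b, ∀ ζ ∈ Icc c d, HasDerivWithinAt (g t ·) (D t ζ) (Icc c d) ζ)
    (hD : ContinuousOn (Function.uncurry D) (Icc a b ×ˢ Icc c d)) :
    ∫ ζ in c..d, (q b ζ - q a ζ) = ∫ t in a..b, (g t d - g t c) := by
  have hD_t : ∀ ζ ∈ Icc c d, ContinuousOn (D · ζ) (Icc a b) := fun ζ hζ =>
    hD.comp (Continuous.prodMk_left ζ).continuousOn fun t ht => ⟨ht, hζ⟩
  have hD_ζ : ∀ t ∈ Icc a b, ContinuousOn (D t) (Icc c d) := fun t ht =>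
    hD.comp (Continuous.prodMk_right t).continuousOn fun ζ hζ => ⟨ht, hζ⟩
  calc ∫ ζ in c..d, (q b ζ - q a ζ) = ∫ ζ in c..d, ∫ t in a..b, D t ζ :=
        intervalIntegral.integral_congr fun ζ hζ => by
          rw [uIcc_of_le hcd] at hζ
          exact (integral_eq_sub_of_hasDerivWithinAt_Icc hab (hq · · ζ hζ) (hD_t ζ hζ)).symm
    _ = ∫ t in a..b, ∫ ζ in c..d, D t ζ :=
        (intervalIntegral_integral_swap_of_continuousOn hab hcd hD).symm
    _ = ∫ t in a..b, (g t d - g t c) :=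
        intervalIntegral.integral_congr fun t ht => by
          rw [uIcc_of_le hab] at ht
          exact integral_eq_sub_of_hasDerivWithinAt_Icc hcd (hg t ht) (hD_ζ t ht)

section

variable {m : Type*} [Fintype m]

theorem HasDerivWithinAt.star_dotProduct {u v : ℝ → m → ℂ} {u' v' : m → ℂ} {s : Set ℝ} {t : ℝ}
    (hu : HasDerivWithinAt u u' s t) (hv : HasDerivWithinAt v v' s t) :
    HasDerivWithinAt (fun τ => star (u τ) ⬝ᵥ v τ) (star u' ⬝ᵥ v t + star (u t) ⬝ᵥ v') s t := by
  simp only [dotProduct, Pi.star_apply, ← Finset.sum_add_distrib]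
  exact HasDerivWithinAt.fun_sum fun i _ =>
    ((hasDerivWithinAt_pi.1 hu i).star.mul (hasDerivWithinAt_pi.1 hv i))

theorem HasDerivWithinAt.const_mulVec {l : Type*} (M : Matrix l m ℂ) {v : ℝ → m → ℂ}
    {v' : m → ℂ} {s : Set ℝ} {t : ℝ} (hv : HasDerivWithinAt v v' s t) :
    HasDerivWithinAt (fun τ => M *ᵥ v τ) (M *ᵥ v') s t :=
  hasDerivWithinAt_pi.2 fun i => HasDerivWithinAt.fun_sum fun j _ =>
    (hasDerivWithinAt_pi.1 hv j).const_mul (M i j)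

theorem ContinuousOn.dotProduct {α R : Type*} [TopologicalSpace α] [TopologicalSpace R]
    [Mul R] [AddCommMonoid R] [ContinuousAdd R] [ContinuousMul R] {u v : α → m → R} {s : Set α}
    (hu : ContinuousOn u s) (hv : ContinuousOn v s) : ContinuousOn (fun p => u p ⬝ᵥ v p) s := by
  rw [continuousOn_iff_continuous_domRestrict] at *
  exact hu.dotProduct hv

theorem ContinuousOn.matrix_mulVec {α R l : Type*} [TopologicalSpace α] [TopologicalSpace R]
    [NonUnitalNonAssocSemiring R] [ContinuousAdd R] [ContinuousMul R] {A : α → Matrix l m R}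
    {v : α → m → R} {s : Set α} (hA : ContinuousOn A s) (hv : ContinuousOn v s) :
    ContinuousOn (fun p => A p *ᵥ v p) s := by
  rw [continuousOn_iff_continuous_domRestrict] at *
  exact hA.matrix_mulVec hv

theorem portHamiltonian_energy_rate {P₁ G₀ A : Matrix m m ℂ}
    (hP₁ : P₁ᴴ = P₁) (hG₀ : G₀ᴴ = -G₀) (hA : Aᴴ = A) (u w : m → ℂ) :
    star (P₁ *ᵥ w + G₀ *ᵥ (A *ᵥ u)) ⬝ᵥ (A *ᵥ u) + star u ⬝ᵥ (A *ᵥ (P₁ *ᵥ w + G₀ *ᵥ (A *ᵥ u)))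
      = star w ⬝ᵥ (P₁ *ᵥ (A *ᵥ u)) + star (A *ᵥ u) ⬝ᵥ (P₁ *ᵥ w) := by
  have hA_adj : ∀ z : m → ℂ, star u ⬝ᵥ (A *ᵥ z) = star (A *ᵥ u) ⬝ᵥ z := fun z => by
    rw [dotProduct_mulVec, star_mulVec, hA]
  have hP₁_adj : star (P₁ *ᵥ w) ⬝ᵥ (A *ᵥ u) = star w ⬝ᵥ (P₁ *ᵥ (A *ᵥ u)) := by
    rw [star_mulVec, hP₁, ← dotProduct_mulVec]
  have hG₀_adj : star (G₀ *ᵥ (A *ᵥ u)) ⬝ᵥ (A *ᵥ u) = -(star (A *ᵥ u) ⬝ᵥ (G₀ *ᵥ (A *ᵥ u))) := by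
    rw [star_mulVec, hG₀, ← dotProduct_mulVec, neg_mulVec, dotProduct_neg]
  rw [star_add, add_dotProduct, mulVec_add, dotProduct_add, hA_adj, hA_adj, hP₁_adj, hG₀_adj]
  ring

theorem portHamiltonian_energy_balance {P₁ G₀ : Matrix m m ℂ}
    (hP₁ : P₁ᴴ = P₁) (hG₀ : G₀ᴴ = -G₀) {H : ℝ → Matrix m m ℂ} (hH : ContinuousOn H (Icc 0 1))
    (hHherm : ∀ ζ ∈ Icc (0 : ℝ) 1, (H ζ)ᴴ = H ζ) {x xt wz : ℝ → ℝ → m → ℂ}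
    (hxt : ∀ t ∈ Ici (0 : ℝ), ∀ ζ ∈ Icc (0 : ℝ) 1,
      HasDerivWithinAt (fun τ => x τ ζ) (xt t ζ) (Ici 0) t)
    (hwz : ∀ t ∈ Ici (0 : ℝ), ∀ ζ ∈ Icc (0 : ℝ) 1,
      HasDerivWithinAt (fun ξ => H ξ *ᵥ x t ξ) (wz t ζ) (Icc 0 1) ζ)
    (hxcont : ContinuousOn (fun p : ℝ × ℝ => x p.1 p.2) (Ici 0 ×ˢ Icc 0 1))
    (hwzcont : ContinuousOn (fun p : ℝ × ℝ => wz p.1 p.2) (Ici 0 ×ˢ Icc 0 1))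
    (hpde : ∀ t ∈ Ici (0 : ℝ), ∀ ζ ∈ Icc (0 : ℝ) 1,
      xt t ζ = P₁ *ᵥ wz t ζ + G₀ *ᵥ (H ζ *ᵥ x t ζ))
    {T : ℝ} (hT : 0 ≤ T) :
    (∫ ζ in (0 : ℝ)..1, star (x T ζ) ⬝ᵥ (H ζ *ᵥ x T ζ)) -
        (∫ ζ in (0 : ℝ)..1, star (x 0 ζ) ⬝ᵥ (H ζ *ᵥ x 0 ζ)) =
      ∫ t in (0 : ℝ)..T, (star (H 1 *ᵥ x t 1) ⬝ᵥ (P₁ *ᵥ (H 1 *ᵥ x t 1)) -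
        star (H 0 *ᵥ x t 0) ⬝ᵥ (P₁ *ᵥ (H 0 *ᵥ x t 0))) := by
  have hHx : ContinuousOn (fun p : ℝ × ℝ => H p.2 *ᵥ x p.1 p.2) (Ici 0 ×ˢ Icc 0 1) :=
    (hH.comp continuous_snd.continuousOn fun _ hp => hp.2).matrix_mulVec hxcont
  have hdensity : ∀ s ∈ Ici (0 : ℝ),
      IntervalIntegrable (fun ζ => star (x s ζ) ⬝ᵥ (H ζ *ᵥ x s ζ)) volume 0 1 := fun s hs =>
    ((hxcont.star.dotProduct hHx).comp (Continuous.prodMk_right s).continuousOn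
      fun _ hζ => ⟨hs, hζ⟩).intervalIntegrable_of_Icc zero_le_one
  rw [← intervalIntegral.integral_sub (hdensity T hT) (hdensity 0 self_mem_Ici)]
  refine integral_sub_eq_integral_flux_sub hT zero_le_one
    (q := fun t ζ => star (x t ζ) ⬝ᵥ (H ζ *ᵥ x t ζ))
    (g := fun t ζ => star (H ζ *ᵥ x t ζ) ⬝ᵥ (P₁ *ᵥ (H ζ *ᵥ x t ζ)))
    (D := fun t ζ => star (wz t ζ) ⬝ᵥ (P₁ *ᵥ (H ζ *ᵥ x t ζ)) +
      star (H ζ *ᵥ x t ζ) ⬝ᵥ (P₁ *ᵥ wz t ζ)) (fun t ht ζ hζ => ?_) (fun t ht ζ hζ => ?_) ?_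
  · have h := ((hxt t ht.1 ζ hζ).star_dotProduct ((hxt t ht.1 ζ hζ).const_mulVec (H ζ))).mono
      (Icc_subset_Ici_self : Icc 0 T ⊆ Ici 0)
    rwa [hpde t ht.1 ζ hζ, portHamiltonian_energy_rate hP₁ hG₀ (hHherm ζ hζ)] at h
  · exact (hwz t ht.1 ζ hζ).star_dotProduct ((hwz t ht.1 ζ hζ).const_mulVec P₁)
  · refine ContinuousOn.mono ?_ (prod_mono Icc_subset_Ici_self subset_rfl)
    exact (hwzcont.star.dotProduct (continuousOn_const.matrix_mulVec hHx)).add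
      (hHx.star.dotProduct (continuousOn_const.matrix_mulVec hwzcont))

theorem norm_equiv_symm_sumElim_zero {𝕜 : Type*} [RCLike 𝕜] (a : m → 𝕜) :
    ‖(EuclideanSpace.equiv (m ⊕ m) 𝕜).symm (Sum.elim 0 a)‖ =
      ‖(EuclideanSpace.equiv m 𝕜).symm a‖ := by
  simp [EuclideanSpace.norm_eq, Fintype.sum_sum_type]

variable [DecidableEq m]

theorem norm_star_dotProduct_mulVec_le {𝕜 : Type*} [RCLike 𝕜] (A : Matrix m m 𝕜) (v : m → 𝕜) :
    ‖star v ⬝ᵥ (A *ᵥ v)‖ ≤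
      ‖toEuclideanCLM (𝕜 := 𝕜) A‖ * ‖(EuclideanSpace.equiv m 𝕜).symm v‖ ^ 2 := by
  set v' := (EuclideanSpace.equiv m 𝕜).symm v
  have hinner : star v ⬝ᵥ (A *ᵥ v) = inner 𝕜 v' (toEuclideanCLM (𝕜 := 𝕜) A v') := by
    rw [EuclideanSpace.inner_eq_star_dotProduct, dotProduct_comm]
    rfl
  rw [hinner]
  calc _ ≤ ‖v'‖ * ‖toEuclideanCLM (𝕜 := 𝕜) A v'‖ := norm_inner_le_norm _ _
    _ ≤ ‖v'‖ * (‖toEuclideanCLM (𝕜 := 𝕜) A‖ * ‖v'‖) := by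
      gcongr
      exact ContinuousLinearMap.le_opNorm _ _
    _ = _ := by ring

theorem continuous_toEuclideanCLM {𝕜 : Type*} [RCLike 𝕜] :
    Continuous (toEuclideanCLM (𝕜 := 𝕜) (n := m)) :=
  (LinearMap.continuous_of_finiteDimensional
    toEuclideanCLM.toAlgEquiv.toLinearEquiv.toLinearMap).congr fun _ => rfl

theorem norm_integral_star_dotProduct_mulVec_le
    {H : ℝ → Matrix m m ℂ} {u : ℝ → m → ℂ} {a b C : ℝ} (hab : a ≤ b)
    (hC : ∀ ζ ∈ Icc a b, ‖toEuclideanCLM (𝕜 := ℂ) (H ζ)‖ ≤ C) (hu : ContinuousOn u (Icc a b)) :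
    ‖∫ ζ in a..b, star (u ζ) ⬝ᵥ (H ζ *ᵥ u ζ)‖ ≤
      C * ∫ ζ in a..b, ‖(EuclideanSpace.equiv m ℂ).symm (u ζ)‖ ^ 2 := by
  rw [← intervalIntegral.integral_const_mul]
  refine intervalIntegral.norm_integral_le_of_norm_le hab (ae_of_all _ fun ζ hζ => ?_) ?_
  · refine (norm_star_dotProduct_mulVec_le _ _).trans ?_
    gcongr
    exact hC ζ (Ioc_subset_Icc_self hζ)
  · refine ContinuousOn.intervalIntegrable_of_Icc hab (continuousOn_const.mul ?_)
    exact ((EuclideanSpace.equiv m ℂ).symm.continuous.comp_continuousOn hu).norm.pow 2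

theorem norm_integral_output_le
    (P : Matrix (m ⊕ m) (m ⊕ m) ℂ) {y : ℝ → m → ℂ}
    (hy : IntegrableOn (fun t => ‖(EuclideanSpace.equiv m ℂ).symm (y t)‖ ^ 2) (Ici 0))
    {T : ℝ} (hT : 0 ≤ T) :
    ‖∫ t in (0 : ℝ)..T, star (Sum.elim 0 (y t)) ⬝ᵥ (P *ᵥ Sum.elim 0 (y t))‖ ≤
      ‖toEuclideanCLM (𝕜 := ℂ) P‖ *
        ∫ t in Ici (0 : ℝ), ‖(EuclideanSpace.equiv m ℂ).symm (y t)‖ ^ 2 := by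
  have hIoc : Ioc 0 T ⊆ Ici (0 : ℝ) := Ioc_subset_Icc_self.trans Icc_subset_Ici_self
  calc _ ≤ ∫ t in (0 : ℝ)..T,
          ‖toEuclideanCLM (𝕜 := ℂ) P‖ * ‖(EuclideanSpace.equiv m ℂ).symm (y t)‖ ^ 2 := by
        refine intervalIntegral.norm_integral_le_of_norm_le hT (ae_of_all _ fun t _ => ?_) ?_
        · rw [← norm_equiv_symm_sumElim_zero]
          exact norm_star_dotProduct_mulVec_le P _
        · exact ((intervalIntegrable_iff_integrableOn_Ioc_of_le hT).2
            (hy.mono_set hIoc)).const_mul _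
    _ ≤ _ := by
        rw [intervalIntegral.integral_const_mul, intervalIntegral.integral_of_le hT]
        exact mul_le_mul_of_nonneg_left
          (setIntegral_mono_set hy (ae_of_all _ fun _ => by positivity) hIoc.eventuallyLE)
          (norm_nonneg _)

theorem conjTranspose_mul_swap_mul_eq_fromBlocks {P₁ : Matrix m m ℂ} (hP₁ : P₁ᴴ = P₁) :
    (((Real.sqrt 2 : ℂ))⁻¹ • fromBlocks P₁ (-P₁) 1 1)ᴴ * fromBlocks 0 1 1 0 *
      (((Real.sqrt 2 : ℂ))⁻¹ • fromBlocks P₁ (-P₁) 1 1) = fromBlocks P₁ 0 0 (-P₁) := by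
  have hstar : star ((Real.sqrt 2 : ℂ))⁻¹ = ((Real.sqrt 2 : ℂ))⁻¹ := by simp
  have hsq : ((Real.sqrt 2 : ℂ))⁻¹ * ((Real.sqrt 2 : ℂ))⁻¹ = 2⁻¹ := by
    rw [← mul_inv, ← Complex.ofReal_mul, Real.mul_self_sqrt zero_le_two, Complex.ofReal_ofNat]
  simp only [conjTranspose_smul, hstar, smul_mul, Matrix.mul_smul, smul_smul, hsq]
  rw [fromBlocks_conjTranspose, conjTranspose_neg, hP₁, fromBlocks_multiply, fromBlocks_multiply]
  ext (i | i) (j | j) <;> simp [fromBlocks, Matrix.smul_apply] <;> ring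

theorem star_mulVec_dotProduct_conj_inv {W : Matrix m m ℂ} (hW : IsUnit W) (M : Matrix m m ℂ)
    (b : m → ℂ) : star (W *ᵥ b) ⬝ᵥ (((W⁻¹)ᴴ * M * W⁻¹) *ᵥ (W *ᵥ b)) = star b ⬝ᵥ (M *ᵥ b) := by
  have hdet := (isUnit_iff_isUnit_det W).1 hW
  rw [mulVec_mulVec, Matrix.mul_assoc, nonsing_inv_mul _ hdet, Matrix.mul_one, ← mulVec_mulVec,
    dotProduct_mulVec, star_mulVec, vecMul_vecMul, ← conjTranspose_mul, nonsing_inv_mul _ hdet,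
    conjTranspose_one, vecMul_one]

theorem portHamiltonian_boundary_flux {P₁ : Matrix m m ℂ} {W_B W_C : Matrix m (m ⊕ m) ℂ}
    (hW : IsUnit (fromRows W_B W_C)) {b₁ b₀ : m → ℂ} (hb : W_B *ᵥ Sum.elim b₁ b₀ = 0) :
    star b₁ ⬝ᵥ (P₁ *ᵥ b₁) - star b₀ ⬝ᵥ (P₁ *ᵥ b₀)
      = star (Sum.elim 0 (W_C *ᵥ Sum.elim b₁ b₀)) ⬝ᵥ
        ((((fromRows W_B W_C)⁻¹)ᴴ * fromBlocks P₁ 0 0 (-P₁) * (fromRows W_B W_C)⁻¹) *ᵥ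
          Sum.elim 0 (W_C *ᵥ Sum.elim b₁ b₀)) := by
  rw [← hb, ← fromRows_mulVec, star_mulVec_dotProduct_conj_inv hW]
  simp [fromBlocks_mulVec, Function.star_sumElim, sumElim_dotProduct_sumElim, neg_mulVec,
    dotProduct_neg, sub_eq_add_neg]

end

theorem exact_observability_estimate_general
    (n : ℕ)
    (P₁ : Matrix (Fin n) (Fin n) ℂ) (hP₁herm : P₁.IsHermitian)
    (G₀ : Matrix (Fin n) (Fin n) ℂ) (hG₀ : G₀ᴴ = -G₀)
    (H : ℝ → Matrix (Fin n) (Fin n) ℂ)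
    (hHcont : ∀ i j, ContinuousOn (fun ζ => H ζ i j) (Set.Icc 0 1))
    (hHherm : ∀ ζ ∈ Set.Icc (0 : ℝ) 1, (H ζ).IsHermitian)
    (W_B W_C : Matrix (Fin n) (Fin n ⊕ Fin n) ℂ)
    (W_BC : Matrix (Fin n ⊕ Fin n) (Fin n ⊕ Fin n) ℂ)
    (hW_BC : W_BC = Matrix.fromRows W_B W_C)
    (hW_BCinv : IsUnit W_BC)
    (R₀ : Matrix (Fin n ⊕ Fin n) (Fin n ⊕ Fin n) ℂ)
    (hR₀ : R₀ = ((Real.sqrt 2 : ℂ))⁻¹ • Matrix.fromBlocks P₁ (-P₁) 1 1)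
    (Sig : Matrix (Fin n ⊕ Fin n) (Fin n ⊕ Fin n) ℂ)
    (hSig : Sig = Matrix.fromBlocks 0 1 1 0)
    (P : Matrix (Fin n ⊕ Fin n) (Fin n ⊕ Fin n) ℂ)
    (hP : P = (W_BC⁻¹)ᴴ * R₀ᴴ * Sig * R₀ * W_BC⁻¹)
    -- the trajectory `x(t,ζ)` and its partial derivatives
    (x xt wz : ℝ → ℝ → Fin n → ℂ)
    (hxt : ∀ t ∈ Set.Ici (0 : ℝ), ∀ ζ ∈ Set.Icc (0 : ℝ) 1,
      HasDerivWithinAt (fun τ => x τ ζ) (xt t ζ) (Set.Ici 0) t)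
    (hwz : ∀ t ∈ Set.Ici (0 : ℝ), ∀ ζ ∈ Set.Icc (0 : ℝ) 1,
      HasDerivWithinAt (fun ξ => (H ξ) *ᵥ x t ξ) (wz t ζ) (Set.Icc 0 1) ζ)
    (hxcont : ContinuousOn (fun p : ℝ × ℝ => x p.1 p.2) (Set.Ici 0 ×ˢ Set.Icc 0 1))
    (hwzcont : ContinuousOn (fun p : ℝ × ℝ => wz p.1 p.2) (Set.Ici 0 ×ˢ Set.Icc 0 1))
    -- (i) the PDE
    (hpde : ∀ t ∈ Set.Ici (0 : ℝ), ∀ ζ ∈ Set.Icc (0 : ℝ) 1,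
      xt t ζ = P₁ *ᵥ wz t ζ + G₀ *ᵥ ((H ζ) *ᵥ x t ζ))
    -- (ii) the boundary condition
    (hbdry : ∀ t ∈ Set.Ici (0 : ℝ),
      W_B *ᵥ Sum.elim ((H 1) *ᵥ x t 1) ((H 0) *ᵥ x t 0) = 0)
    -- (iii) decay of the L²-norm
    (hdecay : Tendsto
      (fun t => ∫ ζ in (0 : ℝ)..1, ‖(EuclideanSpace.equiv (Fin n) ℂ).symm (x t ζ)‖ ^ 2)
      atTop (nhds 0))
    -- the output
    (y : ℝ → Fin n → ℂ)
    (hy : ∀ t, y t = W_C *ᵥ Sum.elim ((H 1) *ᵥ x t 1) ((H 0) *ᵥ x t 0))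
    (hyint : IntegrableOn (fun t => ‖(EuclideanSpace.equiv (Fin n) ℂ).symm (y t)‖ ^ 2)
      (Set.Ici 0)) :
    (2 / ‖Matrix.toEuclideanCLM (𝕜 := ℂ) P‖) *
        ((1 / 2 : ℝ) * (∫ ζ in (0 : ℝ)..1, star (x 0 ζ) ⬝ᵥ ((H ζ) *ᵥ x 0 ζ)).re) ≤
      ∫ t in Set.Ici (0 : ℝ), ‖(EuclideanSpace.equiv (Fin n) ℂ).symm (y t)‖ ^ 2 := by
  set E₀ := (∫ ζ in (0 : ℝ)..1, star (x 0 ζ) ⬝ᵥ ((H ζ) *ᵥ x 0 ζ)).re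
  set Y := ∫ t in Ici (0 : ℝ), ‖(EuclideanSpace.equiv (Fin n) ℂ).symm (y t)‖ ^ 2
  have hH : ContinuousOn H (Icc 0 1) := continuousOn_pi.2 fun i => continuousOn_pi.2 (hHcont i)
  obtain ⟨C, hC⟩ := isCompact_Icc.exists_bound_of_continuousOn
    (continuous_toEuclideanCLM.comp_continuousOn hH)
  have hPblock : P = (W_BC⁻¹)ᴴ * fromBlocks P₁ 0 0 (-P₁) * W_BC⁻¹ := by
    rw [hP, hR₀, hSig, ← conjTranspose_mul_swap_mul_eq_fromBlocks hP₁herm.eq]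
    simp only [Matrix.mul_assoc]
  have hflux : ∀ t ∈ Ici (0 : ℝ), star (H 1 *ᵥ x t 1) ⬝ᵥ (P₁ *ᵥ (H 1 *ᵥ x t 1)) -
      star (H 0 *ᵥ x t 0) ⬝ᵥ (P₁ *ᵥ (H 0 *ᵥ x t 0)) =
      star (Sum.elim 0 (y t)) ⬝ᵥ (P *ᵥ Sum.elim 0 (y t)) := fun t ht => by
    rw [hy, hPblock, hW_BC]
    exact portHamiltonian_boundary_flux (hW_BC ▸ hW_BCinv) (hbdry t ht)
  have hE₀_le : ∀ T, 0 ≤ T → E₀ ≤ C * (∫ ζ in (0 : ℝ)..1,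
      ‖(EuclideanSpace.equiv (Fin n) ℂ).symm (x T ζ)‖ ^ 2) + ‖toEuclideanCLM (𝕜 := ℂ) P‖ * Y := by
    intro T hT
    have hbalance := portHamiltonian_energy_balance hP₁herm.eq hG₀ hH (fun ζ hζ => (hHherm ζ hζ).eq)
      hxt hwz hxcont hwzcont hpde hT
    rw [intervalIntegral.integral_congr fun t ht => hflux t (uIcc_of_le hT ▸ ht).1] at hbalance
    have hxT : ContinuousOn (x T) (Icc 0 1) :=
      hxcont.comp (Continuous.prodMk_right T).continuousOn fun _ hζ => ⟨hT, hζ⟩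
    calc E₀ ≤ ‖_‖ := Complex.re_le_norm _
      _ = ‖_ - _‖ := by rw [← hbalance, sub_sub_cancel]
      _ ≤ _ := norm_sub_le _ _
      _ ≤ _ := add_le_add (norm_integral_star_dotProduct_mulVec_le zero_le_one hC hxT)
        (norm_integral_output_le P hyint hT)
  have hE₀ : E₀ ≤ ‖toEuclideanCLM (𝕜 := ℂ) P‖ * Y :=
    ge_of_tendsto (by simpa using (hdecay.const_mul C).add_const (‖toEuclideanCLM (𝕜 := ℂ) P‖ * Y))
      (eventually_atTop.2 ⟨0, hE₀_le⟩)
  calc _ = E₀ / ‖toEuclideanCLM (𝕜 := ℂ) P‖ := by ring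
    _ ≤ Y := div_le_of_le_mul₀ (norm_nonneg _)
      (setIntegral_nonneg measurableSet_Ici fun _ _ => by positivity) (by linarith)

/-- Exact observability estimate for conservative port-Hamiltonian systems,
trajectory version of Theorem 3.2: if `G₀* = −G₀` and `x(t,ζ)` is a classical solution of
`∂x/∂t = P₁ ∂(Hx)/∂ζ + G₀ H x` with boundary condition `W_B ((Hx)(t,1),(Hx)(t,0)) = 0` whose
`L²`-norm tends to `0`, and whose output `y(t) := W_C ((Hx)(t,1),(Hx)(t,0))` has `‖y‖²`
integrable on `[0,∞)`, then `∫₀^∞ ‖y(t)‖² dt ≥ (2/‖P‖)·‖x(0,·)‖_X²`. -/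
theorem exact_observability_estimate
    (n : ℕ) (hn : 0 < n)
    (P₁ : Matrix (Fin n) (Fin n) ℂ) (hP₁herm : P₁.IsHermitian) (hP₁inv : IsUnit P₁)
    (G₀ : Matrix (Fin n) (Fin n) ℂ) (hG₀ : G₀ᴴ = -G₀)
    (H : ℝ → Matrix (Fin n) (Fin n) ℂ)
    (hHcont : ∀ i j, ContinuousOn (fun ζ => H ζ i j) (Set.Icc 0 1))
    (hHherm : ∀ ζ ∈ Set.Icc (0 : ℝ) 1, (H ζ).IsHermitian)
    (hHpos : ∀ ζ ∈ Set.Icc (0 : ℝ) 1, (H ζ).PosDef)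
    (W_B W_C : Matrix (Fin n) (Fin n ⊕ Fin n) ℂ)
    (W_BC : Matrix (Fin n ⊕ Fin n) (Fin n ⊕ Fin n) ℂ)
    (hW_BC : W_BC = Matrix.fromRows W_B W_C)
    (hW_BCinv : IsUnit W_BC)
    (R₀ : Matrix (Fin n ⊕ Fin n) (Fin n ⊕ Fin n) ℂ)
    (hR₀ : R₀ = ((Real.sqrt 2 : ℂ))⁻¹ • Matrix.fromBlocks P₁ (-P₁) 1 1)
    (Sig : Matrix (Fin n ⊕ Fin n) (Fin n ⊕ Fin n) ℂ)
    (hSig : Sig = Matrix.fromBlocks 0 1 1 0)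
    (P : Matrix (Fin n ⊕ Fin n) (Fin n ⊕ Fin n) ℂ)
    (hP : P = (W_BC⁻¹)ᴴ * R₀ᴴ * Sig * R₀ * W_BC⁻¹)
    -- the trajectory `x(t,ζ)` and its partial derivatives
    (x xt wz : ℝ → ℝ → Fin n → ℂ)
    (hxt : ∀ t ∈ Set.Ici (0 : ℝ), ∀ ζ ∈ Set.Icc (0 : ℝ) 1,
      HasDerivWithinAt (fun τ => x τ ζ) (xt t ζ) (Set.Ici 0) t)
    (hwz : ∀ t ∈ Set.Ici (0 : ℝ), ∀ ζ ∈ Set.Icc (0 : ℝ) 1,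
      HasDerivWithinAt (fun ξ => (H ξ) *ᵥ x t ξ) (wz t ζ) (Set.Icc 0 1) ζ)
    (hxcont : ContinuousOn (fun p : ℝ × ℝ => x p.1 p.2) (Set.Ici 0 ×ˢ Set.Icc 0 1))
    (hxtcont : ContinuousOn (fun p : ℝ × ℝ => xt p.1 p.2) (Set.Ici 0 ×ˢ Set.Icc 0 1))
    (hwzcont : ContinuousOn (fun p : ℝ × ℝ => wz p.1 p.2) (Set.Ici 0 ×ˢ Set.Icc 0 1))
    -- (i) the PDE
    (hpde : ∀ t ∈ Set.Ici (0 : ℝ), ∀ ζ ∈ Set.Icc (0 : ℝ) 1,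
      xt t ζ = P₁ *ᵥ wz t ζ + G₀ *ᵥ ((H ζ) *ᵥ x t ζ))
    -- (ii) the boundary condition
    (hbdry : ∀ t ∈ Set.Ici (0 : ℝ),
      W_B *ᵥ Sum.elim ((H 1) *ᵥ x t 1) ((H 0) *ᵥ x t 0) = 0)
    -- (iii) decay of the L²-norm
    (hdecay : Tendsto
      (fun t => ∫ ζ in (0 : ℝ)..1, ‖(EuclideanSpace.equiv (Fin n) ℂ).symm (x t ζ)‖ ^ 2)
      atTop (nhds 0))
    -- the output
    (y : ℝ → Fin n → ℂ)
    (hy : ∀ t, y t = W_C *ᵥ Sum.elim ((H 1) *ᵥ x t 1) ((H 0) *ᵥ x t 0))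
    (hyint : IntegrableOn (fun t => ‖(EuclideanSpace.equiv (Fin n) ℂ).symm (y t)‖ ^ 2)
      (Set.Ici 0)) :
    (2 / ‖Matrix.toEuclideanCLM (𝕜 := ℂ) P‖) *
        ((1 / 2 : ℝ) * (∫ ζ in (0 : ℝ)..1, star (x 0 ζ) ⬝ᵥ ((H ζ) *ᵥ x 0 ζ)).re) ≤
      ∫ t in Set.Ici (0 : ℝ), ‖(EuclideanSpace.equiv (Fin n) ℂ).symm (y t)‖ ^ 2 :=
  exact_observability_estimate_general n P₁ hP₁herm G₀ hG₀ H hHcont hHherm W_B W_C W_BC hW_BC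
    hW_BCinv R₀ hR₀ Sig hSig P hP x xt wz hxt hwz hxcont hwzcont hpde hbdry hdecay y hy hyint
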